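/- arXiv:1309.1632 — 2 statements merged into one kernel-verified Lean document; each statement's English description precedes it below -/
import Mathlib

section
/- Every connected non-bipartite finite simple graph G with domination number γ contains a non-bipartite unicyclic spanning subgraph H with γ(H) = γ. -/
open SimpleGraph Matrix

open Classical in
/-- The signless Laplacian matrix `Q(G) = D(G) + A(G)` of a simple graph. -/
noncomputable def signlessLaplacian {V : Type*} [Fintype V] (G : SimpleGraph V) : Matrix V V ℝ :=
  G.degMatrix ℝ + G.adjMatrix ℝ

open Classical in
/-- The least eigenvalue of the signless Laplacian. -/
noncomputable def qmin {V : Type*} [Fintype V] (G : SimpleGraph V) : ℝ :=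
  sInf (spectrum ℝ (signlessLaplacian G))

/-- A dominating set: every vertex outside `S` has a neighbor in `S`. -/
def IsDominatingSet {V : Type*} (G : SimpleGraph V) (S : Set V) : Prop :=
  ∀ v ∉ S, ∃ u ∈ S, G.Adj u v

/-- The domination number: minimum cardinality of a dominating set. -/
noncomputable def dominationNumber {V : Type*} [Fintype V] (G : SimpleGraph V) : ℕ :=
  sInf {k | ∃ S : Set V, IsDominatingSet G S ∧ S.ncard = k}

/-!
Take a minimum dominating set `S` of `G` and join every vertex outside `S` to one of its
dominators. This star forest extends to a spanning tree `T` of `G`, in which `S` still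
dominates. Since `T` is bipartite and `G` is not, some edge `xy` of `G` joins two vertices of the
same colour class of `T`; then `T + xy` is unicyclic with an odd cycle, and its domination number
is squeezed between `γ(G)` (it is a subgraph of `G`) and `|S| = γ(G)`.
-/

namespace SimpleGraph

variable {V : Type*}

lemma isAcyclic_fromRel_of_mapsTo {D : Set V} {f : V → V} (hf : Set.MapsTo f Dᶜ D) :
    (fromRel fun a b ↦ a ∉ D ∧ b = f a).IsAcyclic := by
  set F := fromRel fun a b ↦ a ∉ D ∧ b = f a
  have hnbr : ∀ {a b : V}, a ∉ D → F.Adj a b → b = f a := by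
    rintro a b ha ⟨-, ⟨-, rfl⟩ | ⟨hb, rfl⟩⟩
    · rfl
    · exact absurd (hf hb) ha
  have hbridge : ∀ {a b : V}, a ∉ D → F.Adj a b → F.IsBridge s(a, b) := by
    intro a b ha hab
    rw [isBridge_iff_forall_walk_mem_edges]
    rintro (_ | ⟨hac, p⟩)
    · exact absurd rfl hab.ne
    · simp [hnbr ha hac, hnbr ha hab]
  rw [isAcyclic_iff_forall_adj_isBridge]
  intro a b hab
  obtain ⟨-, ⟨ha, -⟩ | ⟨hb, -⟩⟩ := id hab
  · exact hbridge ha hab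
  · exact Sym2.eq_swap ▸ hbridge hb hab.symm

lemma not_colorable_two_sup_edge {T : SimpleGraph V} (hT : T.Preconnected)
    (c : T.Coloring Bool) {x y : V} (hxy : x ≠ y) (hc : c x = c y) :
    ¬ (T ⊔ edge x y).Colorable 2 := by
  rintro ⟨d⟩
  let d' : T.Coloring Bool := (recolorOfEquiv _ finTwoEquiv d).comp (.ofLE le_sup_left)
  have hd' : d' x ≠ d' y :=
    (recolorOfEquiv _ finTwoEquiv d).valid (Or.inr ((edge_adj ..).2 ⟨Or.inl ⟨rfl, rfl⟩, hxy⟩))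
  obtain ⟨p⟩ := hT x y
  have heven : Even p.length := (c.even_length_iff_congr p).2 (by rw [hc])
  have hodd : Odd p.length :=
    (d'.odd_length_iff_not_congr p).2 (by simpa [Bool.eq_not_iff] using hd')
  exact Nat.not_even_iff_odd.2 hodd heven

lemma IsTree.exists_adj_not_colorable_two_sup_edge {G T : SimpleGraph V} (hT : T.IsTree)
    (hG : ¬ G.Colorable 2) : ∃ x y, G.Adj x y ∧ ¬ T.Adj x y ∧ ¬ (T ⊔ edge x y).Colorable 2 := by
  obtain ⟨c⟩ := hT.colorable_two
  set c' : T.Coloring Bool := recolorOfEquiv _ finTwoEquiv c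
  obtain ⟨x, y, hxy, hc⟩ : ∃ x y, G.Adj x y ∧ c' x = c' y := by
    by_contra! h
    exact hG ⟨recolorOfEquiv _ finTwoEquiv.symm (Coloring.mk c' fun hxy ↦ h _ _ hxy)⟩
  exact ⟨x, y, hxy, fun h ↦ c'.valid h hc,
    not_colorable_two_sup_edge hT.connected.preconnected c' hxy.ne hc⟩

lemma IsTree.ncard_edgeSet_sup_edge [Fintype V] {T : SimpleGraph V} (hT : T.IsTree) {x y : V}
    (hxy : x ≠ y) (hTxy : ¬ T.Adj x y) : (T ⊔ edge x y).edgeSet.ncard = Fintype.card V := by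
  classical
  rw [Set.ncard_eq_toFinset_card', ← hT.card_edgeFinset]
  exact T.card_edgeFinset_sup_edge hTxy hxy

end SimpleGraph

section Domination

variable {V : Type*}

lemma IsDominatingSet.mono {G H : SimpleGraph V} (hle : H ≤ G) {S : Set V}
    (hS : IsDominatingSet H S) : IsDominatingSet G S := fun v hv ↦
  let ⟨u, hu, huv⟩ := hS v hv
  ⟨u, hu, hle huv⟩

lemma isDominatingSet_univ (G : SimpleGraph V) : IsDominatingSet G Set.univ :=
  fun v hv ↦ absurd (Set.mem_univ v) hv

lemma IsDominatingSet.exists_isAcyclic_le {G : SimpleGraph V} {S : Set V}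
    (hS : IsDominatingSet G S) : ∃ F ≤ G, F.IsAcyclic ∧ IsDominatingSet F S := by
  have hdom : ∀ v, ∃ u, v ∉ S → u ∈ S ∧ G.Adj u v := fun v ↦ by
    by_cases hv : v ∈ S
    · exact ⟨v, fun h ↦ absurd hv h⟩
    · obtain ⟨u, hu⟩ := hS v hv
      exact ⟨u, fun _ ↦ hu⟩
  choose f hf using hdom
  refine ⟨fromRel fun a b ↦ a ∉ S ∧ b = f a, ?_,
    isAcyclic_fromRel_of_mapsTo fun v hv ↦ (hf v hv).1, fun v hv ↦ ⟨f v, (hf v hv).1, ?_⟩⟩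
  · rintro a b ⟨-, ⟨ha, rfl⟩ | ⟨hb, rfl⟩⟩
    · exact (hf a ha).2.symm
    · exact (hf b hb).2
  · exact (fromRel_adj _ _ _).2 ⟨fun h ↦ hv (h ▸ (hf v hv).1), Or.inr ⟨hv, rfl⟩⟩

variable [Fintype V]

lemma dominationNumber_le_ncard {G : SimpleGraph V} {S : Set V} (hS : IsDominatingSet G S) :
    dominationNumber G ≤ S.ncard :=
  Nat.sInf_le ⟨S, hS, rfl⟩

lemma exists_isDominatingSet_ncard_eq_dominationNumber (G : SimpleGraph V) :
    ∃ S : Set V, IsDominatingSet G S ∧ S.ncard = dominationNumber G :=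
  Nat.sInf_mem (s := {k | ∃ S : Set V, IsDominatingSet G S ∧ S.ncard = k})
    ⟨_, Set.univ, isDominatingSet_univ G, rfl⟩

lemma dominationNumber_anti {G H : SimpleGraph V} (hle : H ≤ G) :
    dominationNumber G ≤ dominationNumber H := by
  obtain ⟨S, hS, hSH⟩ := exists_isDominatingSet_ncard_eq_dominationNumber H
  exact hSH ▸ dominationNumber_le_ncard (hS.mono hle)

end Domination

theorem exists_unicyclic_spanning_same_domination {V : Type*} [Fintype V] (G : SimpleGraph V)
    (hconn : G.Connected) (hnb : ¬ G.Colorable 2) :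
    ∃ H : SimpleGraph V, H ≤ G ∧ H.Connected ∧
      H.edgeSet.ncard = Fintype.card V ∧ ¬ H.Colorable 2 ∧
      dominationNumber H = dominationNumber G := by
  obtain ⟨S, hS, hSγ⟩ := exists_isDominatingSet_ncard_eq_dominationNumber G
  obtain ⟨F, hFG, hF, hSF⟩ := hS.exists_isAcyclic_le
  obtain ⟨T, hFT, hTG, hT⟩ := hconn.exists_isTree_le_of_le_of_isAcyclic hFG hF
  obtain ⟨x, y, hxy, hTxy, hodd⟩ := hT.exists_adj_not_colorable_two_sup_edge hnb
  have hHG : T ⊔ edge x y ≤ G := sup_le hTG ((edge_le_iff G).2 (Or.inr hxy))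
  refine ⟨T ⊔ edge x y, hHG, hT.connected.mono le_sup_left,
    hT.ncard_edgeSet_sup_edge hxy.ne hTxy, hodd, le_antisymm ?_ (dominationNumber_anti hHG)⟩
  exact hSγ ▸ dominationNumber_le_ncard (hSF.mono (hFT.trans le_sup_left))
end

section
/- Let G₁ be a connected graph containing distinct vertices v₁, v₂, and G₂ a connected bipartite graph containing a vertex u. Let G be the coalescence of G₁ at v₂ with G₂ at u, and G* the coalescence of G₁ at v₁ with G₂ at u. If some eigenvector x of Q(G) for the least eigenvalue satisfies |x(v₁)| ≥ |x(v₂)|, then q_min(G*) ≤ q_min(G). -/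
open SimpleGraph Matrix

/-- The coalescence `G₁(v) ⋄ G₂(u)`: disjoint copies of `G₁` and `G₂` with `v` identified
with `u` (the vertex `u` of `G₂` is deleted, and `v` takes over its adjacencies). -/
def coalescence {V₁ V₂ : Type*} (G₁ : SimpleGraph V₁) (G₂ : SimpleGraph V₂) (v : V₁) (u : V₂) :
    SimpleGraph (V₁ ⊕ {w : V₂ // w ≠ u}) where
  Adj a b :=
    match a, b with
    | Sum.inl a, Sum.inl b => G₁.Adj a b
    | Sum.inl a, Sum.inr b => a = v ∧ G₂.Adj u b.1
    | Sum.inr a, Sum.inl b => b = v ∧ G₂.Adj u a.1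
    | Sum.inr a, Sum.inr b => G₂.Adj a.1 b.1
  symm := by
    constructor
    rintro (a | a) (b | b) h
    · exact G₁.adj_symm h
    · exact h
    · exact h
    · exact G₂.adj_symm h
  loopless := by
    constructor
    rintro (a | a) h
    · exact G₁.irrefl h
    · exact G₂.irrefl h

/-!
Rayleigh quotients. A bipartite `G₂` has a sign vector `σ` (`σ u = 1`, alternating along edges),
and in the coordinates `σ • x` the signless quadratic form of the branch `G₂` becomes the Laplacian
one, which is blind to adding a constant. So keep `x` on `G₁` and put `y = ε x + δ σ` on the branch,
with `δ = x(v₁) - ε x(v₂)`: every edge term `(y i + y j)²` of `G₁(v₁) ⋄ G₂(u)` equals the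
corresponding term `(x i + x j)²` of `G₁(v₂) ⋄ G₂(u)`, so `yᵀQy = xᵀQx = q_min ‖x‖²`. The shift
changes `‖x‖²` by `2εδ ⟪σ, x⟫ + n δ²`, and `|x(v₂)| ≤ |x(v₁)|` allows a choice `ε = ±1` making this
nonnegative, whence `q_min(G₁(v₁) ⋄ G₂(u)) ≤ yᵀQy / ‖y‖² ≤ q_min(G₁(v₂) ⋄ G₂(u))`.
-/

open scoped MatrixOrder
open Finset

lemma Matrix.IsHermitian.mul_dotProduct_self_le_of_le_spectrum {n : Type*} [Fintype n]
    [DecidableEq n] {M : Matrix n n ℝ} (hM : M.IsHermitian) {c : ℝ} (hc : ∀ μ ∈ spectrum ℝ M, c ≤ μ)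
    (y : n → ℝ) : c * (y ⬝ᵥ y) ≤ y ⬝ᵥ (M *ᵥ y) := by
  have hpsd : (M - c • 1).PosSemidef := by
    rw [← Algebra.algebraMap_eq_smul_one]
    exact (algebraMap_le_iff_le_spectrum (a := M) hM.isSelfAdjoint).mpr hc
  simpa [sub_mulVec, smul_mulVec, dotProduct_smul] using hpsd.dotProduct_mulVec_nonneg y

lemma exists_sign_nonneg_of_abs_le {a b T n : ℝ} (hab : |b| ≤ |a|) (hn : 0 ≤ n) :
    ∃ ε : ℝ, ε ^ 2 = 1 ∧ 0 ≤ 2 * ε * (a - ε * b) * T + n * (a - ε * b) ^ 2 := by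
  have hsq : b ^ 2 ≤ a ^ 2 := sq_le_sq.mpr hab
  -- `(a - b) T` and `(a + b) T` cannot have opposite strict signs: their product is `(a² - b²) T²`.
  by_cases h : 0 ≤ (a - b) * T
  · exact ⟨1, one_pow 2, by nlinarith [sq_nonneg (a - b)]⟩
  · have h' : (a + b) * T ≤ 0 := by
      nlinarith [mul_nonneg (sub_nonneg.mpr hsq) (sq_nonneg T)]
    exact ⟨-1, by norm_num, by nlinarith [mul_nonneg hn (sq_nonneg (a + b))]⟩

theorem SimpleGraph.Colorable.exists_sign_alternating {V : Type*} {G : SimpleGraph V}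
    (h : G.Colorable 2) (u : V) :
    ∃ σ : V → ℝ, σ u = 1 ∧ (∀ w, σ w ^ 2 = 1) ∧ ∀ a b, G.Adj a b → σ a = -σ b := by
  obtain ⟨C⟩ := h
  refine ⟨fun w => if C w = C u then 1 else -1, by simp,
    fun w => by dsimp only; split_ifs <;> norm_num, fun a b hab => ?_⟩
  have hC := C.valid hab
  have : C a = C u ↔ C b ≠ C u := by omega
  by_cases hb : C b = C u <;> simp_all

section SignlessLaplacian

variable {V : Type*} [Fintype V] (G : SimpleGraph V)

theorem isHermitian_signlessLaplacian : (signlessLaplacian G).IsHermitian := by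
  classical
  rw [signlessLaplacian, IsHermitian, conjTranspose_eq_transpose_of_trivial, transpose_add,
    (G.isSymm_degMatrix (R := ℝ)).eq, (G.isSymm_adjMatrix (α := ℝ)).eq]

open Classical in
theorem dotProduct_signlessLaplacian_mulVec (x : V → ℝ) :
    x ⬝ᵥ (signlessLaplacian G *ᵥ x) =
      (∑ i, ∑ j, if G.Adj i j then (x i + x j) ^ 2 else 0) / 2 := by
  simp_rw [signlessLaplacian, add_mulVec, dotProduct_add, dotProduct_mulVec_degMatrix,
    dotProduct_mulVec_adjMatrix, degree_eq_sum_if_adj, sum_mul, ite_mul, one_mul, zero_mul,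
    ← sum_add_distrib, ite_add_ite, add_zero]
  rw [← add_self_div_two (∑ i, ∑ j, _)]
  conv_lhs => enter [1, 2, 2, i, 2, j]; rw [if_congr (G.adj_comm i j) rfl rfl]
  conv_lhs => enter [1, 2]; rw [sum_comm]
  simp_rw [← sum_add_distrib, ite_add_ite]
  congr 2 with i
  congr 2 with j
  ring_nf

theorem posSemidef_signlessLaplacian : (signlessLaplacian G).PosSemidef := by
  classical
  refine .of_dotProduct_mulVec_nonneg (isHermitian_signlessLaplacian G) fun x => ?_
  rw [star_trivial, dotProduct_signlessLaplacian_mulVec]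
  positivity

theorem qmin_mul_dotProduct_le (y : V → ℝ) :
    qmin G * (y ⬝ᵥ y) ≤ y ⬝ᵥ (signlessLaplacian G *ᵥ y) := by
  classical
  have hbdd : BddBelow (spectrum ℝ (signlessLaplacian G)) :=
    (signlessLaplacian G).finite_real_spectrum.bddBelow
  exact (isHermitian_signlessLaplacian G).mul_dotProduct_self_le_of_le_spectrum
    (fun μ hμ => csInf_le hbdd hμ) y

end SignlessLaplacian

theorem qmin_le_of_eigenvector {V W : Type*} [Fintype V] [Fintype W] {G : SimpleGraph V}
    {H : SimpleGraph W} {x : V → ℝ} (hx0 : x ≠ 0)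
    (hx : signlessLaplacian G *ᵥ x = qmin G • x) (y : W → ℝ)
    (hform : y ⬝ᵥ (signlessLaplacian H *ᵥ y) ≤ x ⬝ᵥ (signlessLaplacian G *ᵥ x))
    (hnorm : x ⬝ᵥ x ≤ y ⬝ᵥ y) :
    qmin H ≤ qmin G := by
  have hxx : 0 < x ⬝ᵥ x := by simpa using dotProduct_star_self_pos_iff.mpr hx0
  have hxQx : x ⬝ᵥ (signlessLaplacian G *ᵥ x) = qmin G * (x ⬝ᵥ x) := by
    rw [hx, dotProduct_smul, smul_eq_mul]
  have hq : 0 ≤ qmin G := by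
    have := (posSemidef_signlessLaplacian G).dotProduct_mulVec_nonneg x
    rw [star_trivial, hxQx] at this
    exact nonneg_of_mul_nonneg_left this hxx
  refine le_of_mul_le_mul_right ?_ (hxx.trans_le hnorm)
  calc qmin H * (y ⬝ᵥ y) ≤ y ⬝ᵥ (signlessLaplacian H *ᵥ y) := qmin_mul_dotProduct_le H y
    _ ≤ qmin G * (x ⬝ᵥ x) := hxQx ▸ hform
    _ ≤ qmin G * (y ⬝ᵥ y) := mul_le_mul_of_nonneg_left hnorm hq

section Coalescence

variable {V₁ V₂ : Type*} (G₁ : SimpleGraph V₁) (G₂ : SimpleGraph V₂) {u : V₂}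

@[simp] theorem coalescence_adj_inl_inl {v : V₁} {a b : V₁} :
    (coalescence G₁ G₂ v u).Adj (.inl a) (.inl b) ↔ G₁.Adj a b := Iff.rfl

@[simp] theorem coalescence_adj_inl_inr {v a : V₁} {b : {w : V₂ // w ≠ u}} :
    (coalescence G₁ G₂ v u).Adj (.inl a) (.inr b) ↔ a = v ∧ G₂.Adj u b := Iff.rfl

@[simp] theorem coalescence_adj_inr_inl {v b : V₁} {a : {w : V₂ // w ≠ u}} :
    (coalescence G₁ G₂ v u).Adj (.inr a) (.inl b) ↔ b = v ∧ G₂.Adj u a := Iff.rfl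

@[simp] theorem coalescence_adj_inr_inr {v : V₁} {a b : {w : V₂ // w ≠ u}} :
    (coalescence G₁ G₂ v u).Adj (.inr a) (.inr b) ↔ G₂.Adj a b := Iff.rfl

def relocate (x : V₁ ⊕ {w : V₂ // w ≠ u} → ℝ) (v₁ v₂ : V₁) (σ : V₂ → ℝ) (ε : ℝ) :
    V₁ ⊕ {w : V₂ // w ≠ u} → ℝ :=
  Sum.elim (x ∘ Sum.inl) fun b => ε * x (.inr b) + σ b * (x (.inl v₁) - ε * x (.inl v₂))

@[simp] theorem relocate_inl (x : V₁ ⊕ {w : V₂ // w ≠ u} → ℝ) (v₁ v₂ : V₁) (σ : V₂ → ℝ) (ε : ℝ)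
    (a : V₁) : relocate x v₁ v₂ σ ε (.inl a) = x (.inl a) := rfl

@[simp] theorem relocate_inr (x : V₁ ⊕ {w : V₂ // w ≠ u} → ℝ) (v₁ v₂ : V₁) (σ : V₂ → ℝ) (ε : ℝ)
    (b : {w : V₂ // w ≠ u}) :
    relocate x v₁ v₂ σ ε (.inr b) = ε * x (.inr b) + σ b * (x (.inl v₁) - ε * x (.inl v₂)) :=
  rfl

variable [Fintype V₁] [Fintype V₂] [DecidableEq V₂]

open Classical in
theorem sum_sum_ite_coalescence_adj {M : Type*} [AddCommMonoid M] (v : V₁)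
    (f : V₁ ⊕ {w : V₂ // w ≠ u} → V₁ ⊕ {w : V₂ // w ≠ u} → M) :
    (∑ i, ∑ j, if (coalescence G₁ G₂ v u).Adj i j then f i j else 0) =
      (∑ a, ∑ b, if G₁.Adj a b then f (.inl a) (.inl b) else 0) +
      (∑ b : {w : V₂ // w ≠ u},
        if G₂.Adj u b then f (.inl v) (.inr b) + f (.inr b) (.inl v) else 0) +
      ∑ a : {w : V₂ // w ≠ u}, ∑ b : {w : V₂ // w ≠ u},
        if G₂.Adj a b then f (.inr a) (.inr b) else 0 := by
  simp only [Fintype.sum_sum_type, coalescence_adj_inl_inl, coalescence_adj_inl_inr,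
    coalescence_adj_inr_inl, coalescence_adj_inr_inr, ite_and, sum_ite_irrel, sum_const_zero,
    sum_add_distrib, sum_ite_eq', mem_univ, if_true, ite_add_zero]
  abel

variable {G₁ G₂} {x : V₁ ⊕ {w : V₂ // w ≠ u} → ℝ} {v₁ v₂ : V₁} {σ : V₂ → ℝ} {ε : ℝ}

theorem dotProduct_signlessLaplacian_relocate (hσ : ∀ a b, G₂.Adj a b → σ a = -σ b)
    (hσu : σ u = 1) (hε : ε ^ 2 = 1) :
    relocate x v₁ v₂ σ ε ⬝ᵥ
        (signlessLaplacian (coalescence G₁ G₂ v₁ u) *ᵥ relocate x v₁ v₂ σ ε) =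
      x ⬝ᵥ (signlessLaplacian (coalescence G₁ G₂ v₂ u) *ᵥ x) := by
  set y := relocate x v₁ v₂ σ ε
  have hsq (t : ℝ) : (ε * t) ^ 2 = t ^ 2 := by rw [mul_pow, hε, one_mul]
  have hbridge (b : {w : V₂ // w ≠ u}) (h : G₂.Adj u b) :
      y (.inr b) + y (.inl v₁) = ε * (x (.inr b) + x (.inl v₂)) := by
    have hb : σ b = -1 := by linarith [hσ u b h]
    simp only [y, relocate_inl, relocate_inr, hb]
    ring
  have hbranch (a b : {w : V₂ // w ≠ u}) (h : G₂.Adj a b) :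
      y (.inr a) + y (.inr b) = ε * (x (.inr a) + x (.inr b)) := by
    simp only [y, relocate_inr, hσ a b h]
    ring
  rw [dotProduct_signlessLaplacian_mulVec, dotProduct_signlessLaplacian_mulVec,
    sum_sum_ite_coalescence_adj, sum_sum_ite_coalescence_adj]
  congr 3
  · refine sum_congr rfl fun b _ => ?_
    split_ifs with h
    · rw [add_comm (y (.inl v₁)), hbridge b h, hsq, add_comm (x (.inl v₂))]
    · rfl
  · funext a
    refine sum_congr rfl fun b _ => ?_
    split_ifs with h
    · rw [hbranch a b h, hsq]
    · rfl

theorem exists_dotProduct_self_le_relocate (hσ : ∀ w, σ w ^ 2 = 1)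
    (habs : |x (.inl v₂)| ≤ |x (.inl v₁)|) :
    ∃ ε : ℝ, ε ^ 2 = 1 ∧ x ⬝ᵥ x ≤ relocate x v₁ v₂ σ ε ⬝ᵥ relocate x v₁ v₂ σ ε := by
  obtain ⟨ε, hε, hgain⟩ := exists_sign_nonneg_of_abs_le
    (T := ∑ b : {w : V₂ // w ≠ u}, σ b * x (.inr b)) (n := Fintype.card {w : V₂ // w ≠ u})
    habs (Nat.cast_nonneg _)
  refine ⟨ε, hε, ?_⟩
  set δ := x (.inl v₁) - ε * x (.inl v₂)
  have hexpand (b : {w : V₂ // w ≠ u}) :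
      relocate x v₁ v₂ σ ε (.inr b) * relocate x v₁ v₂ σ ε (.inr b) =
        x (.inr b) * x (.inr b) + (2 * ε * δ * (σ b * x (.inr b)) + δ ^ 2) := by
    rw [relocate_inr]
    linear_combination x (.inr b) ^ 2 * hε + δ ^ 2 * hσ b
  simp only [dotProduct, Fintype.sum_sum_type, relocate_inl]
  rw [sum_congr rfl fun b _ => hexpand b, sum_add_distrib, sum_add_distrib, ← mul_sum, sum_const,
    card_univ, nsmul_eq_mul]
  linarith

end Coalescence

open Classical in
theorem qmin_relocate_bipartite_branch_general {V₁ V₂ : Type*} [Fintype V₁] [Fintype V₂]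
    [DecidableEq V₂]
    (G₁ : SimpleGraph V₁) (G₂ : SimpleGraph V₂)
    (v₁ v₂ : V₁) (u : V₂)
    (hbip : G₂.Colorable 2)
    (x : V₁ ⊕ {w : V₂ // w ≠ u} → ℝ) (hx0 : x ≠ 0)
    (hx : (signlessLaplacian (coalescence G₁ G₂ v₂ u)).mulVec x =
      qmin (coalescence G₁ G₂ v₂ u) • x)
    (habs : |x (Sum.inl v₂)| ≤ |x (Sum.inl v₁)|) :
    qmin (coalescence G₁ G₂ v₁ u) ≤ qmin (coalescence G₁ G₂ v₂ u) := by
  obtain ⟨σ, hσu, hσsq, hσ⟩ := hbip.exists_sign_alternating u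
  obtain ⟨ε, hε, hnorm⟩ := exists_dotProduct_self_le_relocate hσsq habs
  exact qmin_le_of_eigenvector hx0 hx (relocate x v₁ v₂ σ ε)
    (dotProduct_signlessLaplacian_relocate hσ hσu hε).le hnorm

open Classical in
theorem qmin_relocate_bipartite_branch {V₁ V₂ : Type*} [Fintype V₁] [Fintype V₂]
    [DecidableEq V₂]
    (G₁ : SimpleGraph V₁) (G₂ : SimpleGraph V₂)
    (v₁ v₂ : V₁) (hne : v₁ ≠ v₂) (u : V₂)
    (hG₁ : G₁.Connected) (hG₂ : G₂.Connected) (hbip : G₂.Colorable 2)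
    (x : V₁ ⊕ {w : V₂ // w ≠ u} → ℝ) (hx0 : x ≠ 0)
    (hx : (signlessLaplacian (coalescence G₁ G₂ v₂ u)).mulVec x =
      qmin (coalescence G₁ G₂ v₂ u) • x)
    (habs : |x (Sum.inl v₂)| ≤ |x (Sum.inl v₁)|) :
    qmin (coalescence G₁ G₂ v₁ u) ≤ qmin (coalescence G₁ G₂ v₂ u) :=
  qmin_relocate_bipartite_branch_general G₁ G₂ v₁ v₂ u hbip x hx0 hx habs
end
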